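/- Let V_1, …, V_d be C^∞ vector fields on ℝ^d, bounded with bounded derivatives of all orders, forming a basis of ℝ^d at every point, and assume there exist smooth bounded functions ω_{ij}^l with [V_i, V_j] = Σ_l ω_{ij}^l V_l and ω_{ij}^l = −ω_{il}^j. Let g be the Riemannian metric on ℝ^d with g(x) = (σ(x)σ(x)^T)^{−1}, where σ(x) is the matrix with columns V_1(x), …, V_d(x), and let Γ^l_{ij} = (1/2) Σ_m g^{lm}(∂_i g_{jm} + ∂_j g_{im} − ∂_m g_{ij}) be its Christoffel symbols. Let k : [0,∞) → ℝ^d be smooth with k(0) = 0 and let x(·) solve x'(t) = Σ_i V_i(x(t)) k_i'(t), x(0) = x₀. Then x satisfies the geodesic equation x''^l(t) + Σ_{i,j} Γ^l_{ij}(x(t)) x'^i(t) x'^j(t) = 0 for all t and all l if and only if k'' ≡ 0, i.e. k(t) = t·u for some u ∈ ℝ^d. -/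

import Mathlib

open Set

/-- The matrix `σ(x)` whose columns are `V₁(x), …, V_d(x)`. -/
def sigmaMat {d : ℕ} (V : Fin d → (Fin d → ℝ) → (Fin d → ℝ)) (x : Fin d → ℝ) :
    Matrix (Fin d) (Fin d) ℝ :=
  Matrix.of fun i j => V j x i

/-- The Riemannian metric `g(x) = (σ(x) σ(x)ᵀ)⁻¹` making `V₁(x),…,V_d(x)` an orthonormal
frame at each point. -/
noncomputable def metricMat {d : ℕ} (V : Fin d → (Fin d → ℝ) → (Fin d → ℝ))
    (x : Fin d → ℝ) : Matrix (Fin d) (Fin d) ℝ :=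
  (sigmaMat V x * (sigmaMat V x).transpose)⁻¹

/-- The Christoffel symbols
`Γ^l_{ij} = (1/2) Σ_m g^{lm} (∂_i g_{jm} + ∂_j g_{im} - ∂_m g_{ij})` of the metric `g`. -/
noncomputable def christoffel {d : ℕ} (V : Fin d → (Fin d → ℝ) → (Fin d → ℝ))
    (l i j : Fin d) (x : Fin d → ℝ) : ℝ :=
  (1/2) * ∑ m, (metricMat V x)⁻¹ l m *
    (fderiv ℝ (fun z => metricMat V z j m) x (Pi.single i 1)
      + fderiv ℝ (fun z => metricMat V z i m) x (Pi.single j 1)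
      - fderiv ℝ (fun z => metricMat V z i j) x (Pi.single m 1))

open Matrix

namespace GeoAux


lemma diffAt_finset_prod {E : Type*} [NormedAddCommGroup E] [NormedSpace ℝ E]
    {ι : Type*} [DecidableEq ι] {u : Finset ι} {g : ι → E → ℝ} {x : E}
    (hg : ∀ i ∈ u, DifferentiableAt ℝ (g i) x) :
    DifferentiableAt ℝ (fun z => ∏ i ∈ u, g i z) x :=
  (HasFDerivAt.finset_prod (fun i hi => (hg i hi).hasFDerivAt)).differentiableAt

lemma diffAt_det {d : ℕ} {E : Type*} [NormedAddCommGroup E] [NormedSpace ℝ E]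
    {M : E → Matrix (Fin d) (Fin d) ℝ} {x : E}
    (h : ∀ i j, DifferentiableAt ℝ (fun z => M z i j) x) :
    DifferentiableAt ℝ (fun z => (M z).det) x := by
  simp only [Matrix.det_apply']
  exact DifferentiableAt.fun_sum fun σ _ =>
    (diffAt_finset_prod (fun i _ => h (σ i) i)).const_mul _

lemma diffAt_inv_entry {d : ℕ} {E : Type*} [NormedAddCommGroup E] [NormedSpace ℝ E]
    {M : E → Matrix (Fin d) (Fin d) ℝ} {x : E}
    (h : ∀ i j, DifferentiableAt ℝ (fun z => M z i j) x)
    (hdet : (M x).det ≠ 0) (i j : Fin d) :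
    DifferentiableAt ℝ (fun z => (M z)⁻¹ i j) x := by
  have hd : ∀ z, (M z)⁻¹ i j = ((M z).det)⁻¹ * (M z).adjugate i j := by
    intro z
    rw [Matrix.inv_def, Matrix.smul_apply, Ring.inverse_eq_inv', smul_eq_mul]
  simp only [hd]
  have hadj : DifferentiableAt ℝ (fun z => (M z).adjugate i j) x := by
    simp only [Matrix.adjugate_apply]
    apply diffAt_det
    intro a b
    by_cases hab : a = j
    · simp only [hab, Matrix.updateRow_self]
      exact differentiableAt_const _
    · simp only [Matrix.updateRow_ne hab]
      exact h a b
  exact ((diffAt_det h).inv hdet).mul hadj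


variable {d : ℕ} {V : Fin d → (Fin d → ℝ) → (Fin d → ℝ)}

/-- `A(x) = σ(x) σ(x)ᵀ`. -/
def Amat (V : Fin d → (Fin d → ℝ) → (Fin d → ℝ)) (x : Fin d → ℝ) :
    Matrix (Fin d) (Fin d) ℝ :=
  sigmaMat V x * (sigmaMat V x).transpose

lemma hSunit (hbasis : ∀ x, LinearIndependent ℝ fun i => V i x) (x : Fin d → ℝ) :
    IsUnit (sigmaMat V x) := by
  rw [← Matrix.linearIndependent_cols_iff_isUnit]
  exact hbasis x

lemma hSdet (hbasis : ∀ x, LinearIndependent ℝ fun i => V i x) (x : Fin d → ℝ) :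
    IsUnit (sigmaMat V x).det :=
  (Matrix.isUnit_iff_isUnit_det _).mp (hSunit hbasis x)

lemma hAdet (hbasis : ∀ x, LinearIndependent ℝ fun i => V i x) (x : Fin d → ℝ) :
    IsUnit (Amat V x).det := by
  rw [Amat, Matrix.det_mul, Matrix.det_transpose]
  exact (hSdet hbasis x).mul (hSdet hbasis x)

lemma hGinv (hbasis : ∀ x, LinearIndependent ℝ fun i => V i x) (x : Fin d → ℝ) :
    (metricMat V x)⁻¹ = Amat V x :=
  Matrix.nonsing_inv_nonsing_inv _ (hAdet hbasis x)

lemma hGA (hbasis : ∀ x, LinearIndependent ℝ fun i => V i x) (x : Fin d → ℝ) :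
    metricMat V x * Amat V x = 1 :=
  Matrix.nonsing_inv_mul _ (hAdet hbasis x)

lemma hAG (hbasis : ∀ x, LinearIndependent ℝ fun i => V i x) (x : Fin d → ℝ) :
    Amat V x * metricMat V x = 1 :=
  Matrix.mul_nonsing_inv _ (hAdet hbasis x)

lemma hAsym (x : Fin d → ℝ) : (Amat V x).transpose = Amat V x := by
  rw [Amat, Matrix.transpose_mul, Matrix.transpose_transpose]

lemma hGsym (x : Fin d → ℝ) : (metricMat V x).transpose = metricMat V x := by
  rw [metricMat, Matrix.transpose_nonsing_inv, ← Amat, hAsym, Amat]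

lemma hAent (x : Fin d → ℝ) (i j : Fin d) :
    Amat V x i j = ∑ r, V r x i * V r x j := by
  simp [Amat, Matrix.mul_apply, sigmaMat]


lemma hVcomp (hV : ∀ i, ContDiff ℝ (⊤ : ℕ∞) (V i)) (i l : Fin d) :
    Differentiable ℝ (fun z => V i z l) := fun x =>
  (differentiableAt_pi.mp ((hV i).differentiable (by simp) x)) l

lemma fderiv_comp_proj {E : Type*} [NormedAddCommGroup E] [NormedSpace ℝ E]
    {f : E → Fin d → ℝ} {x : E} (hf : DifferentiableAt ℝ f x) (l : Fin d) (w : E) :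
    fderiv ℝ (fun z => f z l) x w = fderiv ℝ f x w l := by
  have h := (hasFDerivAt_pi'.mp hf.hasFDerivAt) l
  rw [h.fderiv]; rfl

lemma hAdiff (hV : ∀ i, ContDiff ℝ (⊤ : ℕ∞) (V i)) (i j : Fin d) :
    Differentiable ℝ (fun z => Amat V z i j) := by
  intro x
  simp only [hAent]
  exact DifferentiableAt.fun_sum fun r _ => ((hVcomp hV r i) x).mul ((hVcomp hV r j) x)

lemma hGdiff (hV : ∀ i, ContDiff ℝ (⊤ : ℕ∞) (V i))
    (hbasis : ∀ x, LinearIndependent ℝ fun i => V i x) (i j : Fin d) :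
    Differentiable ℝ (fun z => metricMat V z i j) := by
  intro x
  have : (fun z => metricMat V z i j) = fun z => (Amat V z)⁻¹ i j := rfl
  rw [this]
  exact diffAt_inv_entry (fun a b => hAdiff hV a b x) ((hAdet hbasis x).ne_zero) i j


lemma clm_apply_eq_sum' {F : Type*} [NormedAddCommGroup F] [NormedSpace ℝ F]
    (L : (Fin d → ℝ) →L[ℝ] F) (v : Fin d → ℝ) :
    L v = ∑ p, v p • L (Pi.single p 1) := by
  conv_lhs => rw [← Finset.univ_sum_single v]
  rw [map_sum]
  refine Finset.sum_congr rfl fun p _ => ?_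
  have h : Pi.single p (v p) = v p • (Pi.single p 1 : Fin d → ℝ) := by
    funext q
    rcases eq_or_ne q p with hq | hq
    · subst hq; simp
    · simp [Pi.single_eq_of_ne hq]
  rw [h, _root_.map_smul]

lemma clm_apply_eq_sum (L : (Fin d → ℝ) →L[ℝ] ℝ) (v : Fin d → ℝ) :
    L v = ∑ p, v p * L (Pi.single p 1) := clm_apply_eq_sum' L v

/-- directional derivative matrix of `σ`. -/
noncomputable def DSm (V : Fin d → (Fin d → ℝ) → (Fin d → ℝ)) (x w : Fin d → ℝ) :
    Matrix (Fin d) (Fin d) ℝ := Matrix.of fun i j => fderiv ℝ (V j) x w i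

noncomputable def DAm (V : Fin d → (Fin d → ℝ) → (Fin d → ℝ)) (x w : Fin d → ℝ) :
    Matrix (Fin d) (Fin d) ℝ := Matrix.of fun i j => fderiv ℝ (fun z => Amat V z i j) x w

noncomputable def DGm (V : Fin d → (Fin d → ℝ) → (Fin d → ℝ)) (x w : Fin d → ℝ) :
    Matrix (Fin d) (Fin d) ℝ :=
  Matrix.of fun i j => fderiv ℝ (fun z => metricMat V z i j) x w

lemma hDA (hV : ∀ i, ContDiff ℝ (⊤ : ℕ∞) (V i)) (x w : Fin d → ℝ) :
    DAm V x w = DSm V x w * (sigmaMat V x).transpose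
      + sigmaMat V x * (DSm V x w).transpose := by
  ext i j
  have h1 : (fun z => Amat V z i j) = fun z => ∑ r, V r z i * V r z j := by
    funext z; exact hAent z i j
  have h2 : fderiv ℝ (fun z => Amat V z i j) x w
      = ∑ r, (fderiv ℝ (fun z => V r z i) x w * V r x j
          + V r x i * fderiv ℝ (fun z => V r z j) x w) := by
    rw [h1, fderiv_fun_sum (fun r _ => ((hVcomp hV r i) x).fun_mul ((hVcomp hV r j) x))]
    rw [ContinuousLinearMap.sum_apply]
    refine Finset.sum_congr rfl fun r _ => ?_
    rw [fderiv_fun_mul ((hVcomp hV r i) x) ((hVcomp hV r j) x)]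
    simp only [ContinuousLinearMap.add_apply, ContinuousLinearMap.smul_apply, smul_eq_mul]; ring
  show fderiv ℝ (fun z => Amat V z i j) x w = _
  rw [h2]
  simp only [Matrix.add_apply, Matrix.mul_apply, Matrix.transpose_apply, DSm, Matrix.of_apply,
    sigmaMat, ← Finset.sum_add_distrib]
  refine Finset.sum_congr rfl fun r _ => ?_
  rw [fderiv_comp_proj ((hV r).differentiable (by simp) x) i w,
    fderiv_comp_proj ((hV r).differentiable (by simp) x) j w]

lemma hDGDA (hV : ∀ i, ContDiff ℝ (⊤ : ℕ∞) (V i))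
    (hbasis : ∀ x, LinearIndependent ℝ fun i => V i x) (x w : Fin d → ℝ) :
    DGm V x w * Amat V x + metricMat V x * DAm V x w = 0 := by
  ext i j
  have h0 : (fun z => ∑ r, metricMat V z i r * Amat V z r j)
      = fun _ => (1 : Matrix (Fin d) (Fin d) ℝ) i j := by
    funext z
    rw [← Matrix.mul_apply, hGA hbasis z]
  have h2 : fderiv ℝ (fun z => ∑ r, metricMat V z i r * Amat V z r j) x w
      = ∑ r, (fderiv ℝ (fun z => metricMat V z i r) x w * Amat V x r j
          + metricMat V x i r * fderiv ℝ (fun z => Amat V z r j) x w) := by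
    rw [fderiv_fun_sum (fun r _ => ((hGdiff hV hbasis i r) x).fun_mul ((hAdiff hV r j) x))]
    rw [ContinuousLinearMap.sum_apply]
    refine Finset.sum_congr rfl fun r _ => ?_
    rw [fderiv_fun_mul ((hGdiff hV hbasis i r) x) ((hAdiff hV r j) x)]
    simp only [ContinuousLinearMap.add_apply, ContinuousLinearMap.smul_apply, smul_eq_mul]; ring
  have h3 : fderiv ℝ (fun z => ∑ r, metricMat V z i r * Amat V z r j) x w = 0 := by
    rw [h0]; simp
  rw [h3] at h2
  simp only [Matrix.add_apply, Matrix.mul_apply, Matrix.zero_apply, DGm, DAm, Matrix.of_apply,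
    ← Finset.sum_add_distrib]
  exact h2.symm

lemma hDG (hV : ∀ i, ContDiff ℝ (⊤ : ℕ∞) (V i))
    (hbasis : ∀ x, LinearIndependent ℝ fun i => V i x) (x w : Fin d → ℝ) :
    DGm V x w = -(metricMat V x * DAm V x w * metricMat V x) := by
  have h1 := hDGDA hV hbasis x w
  have h2 : DGm V x w * Amat V x = -(metricMat V x * DAm V x w) :=
    eq_neg_of_add_eq_zero_left h1
  calc DGm V x w = DGm V x w * (Amat V x * metricMat V x) := by rw [hAG hbasis x, mul_one]
    _ = (DGm V x w * Amat V x) * metricMat V x := by rw [mul_assoc]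
    _ = -(metricMat V x * DAm V x w) * metricMat V x := by rw [h2]
    _ = -(metricMat V x * DAm V x w * metricMat V x) := by rw [neg_mul]


lemma hDGsym (hbasis : ∀ x, LinearIndependent ℝ fun i => V i x) (x w : Fin d → ℝ)
    (i j : Fin d) : DGm V x w i j = DGm V x w j i := by
  have h : (fun z => metricMat V z i j) = (fun z => metricMat V z j i) := by
    funext z
    exact (congrFun (congrFun (hGsym (V := V) z) i) j).symm
  show fderiv ℝ (fun z => metricMat V z i j) x w = fderiv ℝ (fun z => metricMat V z j i) x w
  rw [h]

lemma hanti (hbasis : ∀ x, LinearIndependent ℝ fun i => V i x)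
    {ω : Fin d → Fin d → Fin d → (Fin d → ℝ) → ℝ}
    (hbracket : ∀ i j (x : Fin d → ℝ),
      fderiv ℝ (V j) x (V i x) - fderiv ℝ (V i) x (V j x) = ∑ l, ω i j l x • V l x)
    (i j r : Fin d) (x : Fin d → ℝ) : ω i j r x = - ω j i r x := by
  have h1 := hbracket i j x
  have h2 := hbracket j i x
  have h3 : ∑ l, (fun l => ω i j l x + ω j i l x) l • V l x = 0 := by
    simp only [add_smul, Finset.sum_add_distrib, ← h1, ← h2]
    abel
  have := (Fintype.linearIndependent_iff.mp (hbasis x)) _ h3 r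
  linarith

lemma antisym_pairing (a : Fin d → ℝ) (f : Fin d → Fin d → ℝ)
    (hf : ∀ i j, f i j = - f j i) :
    ∑ i, ∑ j, a i * a j * f i j = 0 := by
  have h : ∑ i, ∑ j, a i * a j * f i j = - ∑ i, ∑ j, a i * a j * f i j := by
    calc ∑ i, ∑ j, a i * a j * f i j = ∑ j, ∑ i, a i * a j * f i j := Finset.sum_comm
      _ = ∑ i, ∑ j, a j * a i * f j i := rfl
      _ = - ∑ i, ∑ j, a i * a j * f i j := by
          rw [← Finset.sum_neg_distrib]
          refine Finset.sum_congr rfl fun i _ => ?_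
          rw [← Finset.sum_neg_distrib]
          refine Finset.sum_congr rfl fun j _ => ?_
          rw [hf i j]; ring
  linarith

lemma frame_identity (hbasis : ∀ x, LinearIndependent ℝ fun i => V i x)
    {ω : Fin d → Fin d → Fin d → (Fin d → ℝ) → ℝ}
    (hbracket : ∀ i j (x : Fin d → ℝ),
      fderiv ℝ (V j) x (V i x) - fderiv ℝ (V i) x (V j x) = ∑ l, ω i j l x • V l x)
    (hskew : ∀ i j l x, ω i j l x = - ω i l j x)
    (x a b : Fin d → ℝ) (l : Fin d)
    (hb : ∀ r, ∑ p, V r x p * b p = a r) :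
    ∑ j, V j x l * (∑ i, a i * ∑ p, (fderiv ℝ (V j) x (V i x)) p * b p)
      = ∑ i, V i x l * (∑ j, a j * ∑ p, (fderiv ℝ (V j) x (V i x)) p * b p) := by
  -- difference equals the ω-sum, which vanishes
  have hdot : ∀ i j, (∑ p, (fderiv ℝ (V j) x (V i x)) p * b p)
      - (∑ p, (fderiv ℝ (V i) x (V j x)) p * b p)
      = ∑ r, ω i j r x * a r := by
    intro i j
    have h1 : ∀ p, (fderiv ℝ (V j) x (V i x)) p - (fderiv ℝ (V i) x (V j x)) p
        = ∑ r, ω i j r x * V r x p := by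
      intro p
      have := congrFun (hbracket i j x) p
      simpa [Finset.sum_apply, Pi.sub_apply] using this
    calc (∑ p, (fderiv ℝ (V j) x (V i x)) p * b p)
          - (∑ p, (fderiv ℝ (V i) x (V j x)) p * b p)
        = ∑ p, ((fderiv ℝ (V j) x (V i x)) p - (fderiv ℝ (V i) x (V j x)) p) * b p := by
          rw [← Finset.sum_sub_distrib]
          exact Finset.sum_congr rfl fun p _ => by ring
      _ = ∑ p, (∑ r, ω i j r x * V r x p) * b p := by
          exact Finset.sum_congr rfl fun p _ => by rw [h1 p]
      _ = ∑ p, ∑ r, ω i j r x * V r x p * b p := by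
          refine Finset.sum_congr rfl fun p _ => ?_
          rw [Finset.sum_mul]
      _ = ∑ r, ∑ p, ω i j r x * V r x p * b p := Finset.sum_comm
      _ = ∑ r, ω i j r x * ∑ p, V r x p * b p := by
          refine Finset.sum_congr rfl fun r _ => ?_
          rw [Finset.mul_sum]
          refine Finset.sum_congr rfl fun p _ => by ring
      _ = ∑ r, ω i j r x * a r := by
          exact Finset.sum_congr rfl fun r _ => by rw [hb r]
  -- rename the RHS indices
  have hrhs : ∑ i, V i x l * (∑ j, a j * ∑ p, (fderiv ℝ (V j) x (V i x)) p * b p)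
      = ∑ j, V j x l * (∑ i, a i * ∑ p, (fderiv ℝ (V i) x (V j x)) p * b p) := rfl
  rw [hrhs, ← sub_eq_zero]
  have hz : ∑ j, V j x l * (∑ i, a i * ∑ p, (fderiv ℝ (V j) x (V i x)) p * b p)
      - ∑ j, V j x l * (∑ i, a i * ∑ p, (fderiv ℝ (V i) x (V j x)) p * b p)
      = ∑ j, ∑ i, V j x l * a i * (∑ r, ω i j r x * a r) := by
    rw [← Finset.sum_sub_distrib]
    refine Finset.sum_congr rfl fun j _ => ?_
    rw [← mul_sub, ← Finset.sum_sub_distrib, Finset.mul_sum]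
    refine Finset.sum_congr rfl fun i _ => ?_
    rw [← mul_sub, ← hdot i j]
    ring
  rw [hz]
  -- now show the ω-sum vanishes
  have hswap : ∑ j, ∑ i, V j x l * a i * (∑ r, ω i j r x * a r)
      = - ∑ r, V r x l * (∑ i, ∑ j, a i * a j * ω i j r x) := by
    calc ∑ j, ∑ i, V j x l * a i * (∑ r, ω i j r x * a r)
        = ∑ j, ∑ i, ∑ r, -(V j x l * a i * (ω i r j x * a r)) := by
          refine Finset.sum_congr rfl fun j _ => Finset.sum_congr rfl fun i _ => ?_
          rw [Finset.mul_sum]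
          refine Finset.sum_congr rfl fun r _ => ?_
          rw [hskew i j r x]; ring
      _ = ∑ r, ∑ i, ∑ j, -(V r x l * a i * (ω i j r x * a j)) := rfl
      _ = - ∑ r, V r x l * (∑ i, ∑ j, a i * a j * ω i j r x) := by
          rw [← Finset.sum_neg_distrib]
          refine Finset.sum_congr rfl fun r _ => ?_
          rw [Finset.mul_sum, ← Finset.sum_neg_distrib]
          refine Finset.sum_congr rfl fun i _ => ?_
          rw [Finset.mul_sum, ← Finset.sum_neg_distrib]
          exact Finset.sum_congr rfl fun j _ => by ring
  rw [hswap]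
  have hzero : ∀ r : Fin d, ∑ i, ∑ j, a i * a j * ω i j r x = 0 := fun r =>
    antisym_pairing a (fun i j => ω i j r x) (fun i j => hanti hbasis hbracket i j r x)
  simp [hzero]


lemma DSm_apply (x w : Fin d → ℝ) (i j : Fin d) :
    DSm V x w i j = fderiv ℝ (V j) x w i := rfl

lemma mulVec_eq (x a : Fin d → ℝ) :
    (sigmaMat V x).mulVec a = ∑ i, a i • V i x := by
  funext j
  simp only [Matrix.mulVec, dotProduct, sigmaMat, Matrix.of_apply,
    Finset.sum_apply, Pi.smul_apply, smul_eq_mul]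
  exact Finset.sum_congr rfl fun i _ => by ring

lemma hStb (hbasis : ∀ x, LinearIndependent ℝ fun i => V i x) (x a : Fin d → ℝ) :
    (sigmaMat V x).transpose.mulVec
      ((metricMat V x).mulVec ((sigmaMat V x).mulVec a)) = a := by
  rw [Matrix.mulVec_mulVec, Matrix.mulVec_mulVec]
  have hdt : IsUnit (sigmaMat V x).transpose.det := by
    rw [Matrix.det_transpose]; exact hSdet hbasis x
  have h : (sigmaMat V x).transpose * metricMat V x * sigmaMat V x = 1 := by
    rw [metricMat, Matrix.mul_inv_rev, ← Matrix.mul_assoc,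
      Matrix.mul_nonsing_inv _ hdt, Matrix.one_mul,
      Matrix.nonsing_inv_mul _ (hSdet hbasis x)]
  rw [h, Matrix.one_mulVec]

lemma christoffel_contract (hV : ∀ i, ContDiff ℝ (⊤ : ℕ∞) (V i))
    (hbasis : ∀ x, LinearIndependent ℝ fun i => V i x)
    {ω : Fin d → Fin d → Fin d → (Fin d → ℝ) → ℝ}
    (hbracket : ∀ i j (x : Fin d → ℝ),
      fderiv ℝ (V j) x (V i x) - fderiv ℝ (V i) x (V j x) = ∑ l, ω i j l x • V l x)
    (hskew : ∀ i j l x, ω i j l x = - ω i l j x)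
    (x a : Fin d → ℝ) (l : Fin d) :
    ∑ p, ∑ q, christoffel V l p q x * ((sigmaMat V x).mulVec a) p
        * ((sigmaMat V x).mulVec a) q
      = - ∑ i, a i * (fderiv ℝ (V i) x ((sigmaMat V x).mulVec a)) l := by
  set S := sigmaMat V x with hSdef
  set v := S.mulVec a with hvdef
  set G := metricMat V x with hGdef
  set A := Amat V x with hAdef
  set b := G.mulVec v with hbdef
  have hstb : S.transpose.mulVec b = a := hStb hbasis x a
  have hbr : ∀ r, ∑ p, V r x p * b p = a r := by
    intro r
    have h := congrFun hstb r
    simpa [Matrix.mulVec, dotProduct, Matrix.transpose_apply, hSdef, sigmaMat]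
      using h
  have hv' : v = ∑ i, a i • V i x := mulVec_eq x a
  have hfdv : ∀ j : Fin d, fderiv ℝ (V j) x v = ∑ i, a i • fderiv ℝ (V j) x (V i x) := by
    intro j
    rw [hv', map_sum]
    exact Finset.sum_congr rfl fun i _ => by rw [_root_.map_smul]
  -- Step 1 : unfold christoffel
  have step1 : ∀ p q, christoffel V l p q x
      = 1/2 * ∑ m, A l m * (DGm V x (Pi.single p 1) q m
          + DGm V x (Pi.single q 1) p m - DGm V x (Pi.single m 1) p q) := by
    intro p q
    rw [christoffel, hAdef, ← hGinv hbasis x]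
    rfl
  -- directional linearity of DGm
  have hDglin : ∀ q m, DGm V x v q m = ∑ p, v p * DGm V x (Pi.single p 1) q m := by
    intro q m
    exact clm_apply_eq_sum (fderiv ℝ (fun z => metricMat V z q m) x) v
  -- inner double-sum computations
  have e1 : ∀ m, ∑ p, ∑ q, (v p * v q) * DGm V x (Pi.single p 1) q m
      = ∑ q, v q * DGm V x v q m := by
    intro m
    rw [Finset.sum_comm]
    refine Finset.sum_congr rfl fun q _ => ?_
    rw [hDglin q m, Finset.mul_sum]
    exact Finset.sum_congr rfl fun p _ => by ring
  have e2 : ∀ m, ∑ p, ∑ q, (v p * v q) * DGm V x (Pi.single q 1) p m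
      = ∑ q, v q * DGm V x v q m := by
    intro m
    refine Finset.sum_congr rfl fun p _ => ?_
    rw [hDglin p m, Finset.mul_sum]
    exact Finset.sum_congr rfl fun q _ => by ring
  -- main regrouping
  have hT : ∑ p, ∑ q, christoffel V l p q x * v p * v q
      = 1/2 * ∑ m, A l m * ((∑ q, v q * DGm V x v q m) + (∑ q, v q * DGm V x v q m)
          - ∑ p, ∑ q, (v p * v q) * DGm V x (Pi.single m 1) p q) := by
    calc ∑ p, ∑ q, christoffel V l p q x * v p * v q
        = ∑ p, ∑ q, ∑ m, 1/2 * (A l m * (DGm V x (Pi.single p 1) q m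
            + DGm V x (Pi.single q 1) p m - DGm V x (Pi.single m 1) p q)) * (v p * v q) := by
          refine Finset.sum_congr rfl fun p _ => Finset.sum_congr rfl fun q _ => ?_
          rw [step1 p q, Finset.mul_sum, Finset.sum_mul, Finset.sum_mul]
          refine Finset.sum_congr rfl fun m _ => by ring
      _ = ∑ p, ∑ m, ∑ q, 1/2 * (A l m * (DGm V x (Pi.single p 1) q m
            + DGm V x (Pi.single q 1) p m - DGm V x (Pi.single m 1) p q)) * (v p * v q) := by
          exact Finset.sum_congr rfl fun p _ => Finset.sum_comm
      _ = ∑ m, ∑ p, ∑ q, 1/2 * (A l m * (DGm V x (Pi.single p 1) q m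
            + DGm V x (Pi.single q 1) p m - DGm V x (Pi.single m 1) p q)) * (v p * v q) :=
          Finset.sum_comm
      _ = 1/2 * ∑ m, A l m * ((∑ q, v q * DGm V x v q m) + (∑ q, v q * DGm V x v q m)
          - ∑ p, ∑ q, (v p * v q) * DGm V x (Pi.single m 1) p q) := by
          rw [Finset.mul_sum]
          refine Finset.sum_congr rfl fun m _ => ?_
          have split : ∀ p q : Fin d, 1/2 * (A l m * (DGm V x (Pi.single p 1) q m
              + DGm V x (Pi.single q 1) p m - DGm V x (Pi.single m 1) p q)) * (v p * v q)
              = 1/2 * A l m * ((v p * v q) * DGm V x (Pi.single p 1) q m)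
                + 1/2 * A l m * ((v p * v q) * DGm V x (Pi.single q 1) p m)
                - 1/2 * A l m * ((v p * v q) * DGm V x (Pi.single m 1) p q) := by
            intro p q; ring
          simp only [split, Finset.sum_add_distrib, Finset.sum_sub_distrib,
            ← Finset.mul_sum]
          rw [e1 m, e2 m]
          ring
  -- local matrix-algebra facts in terms of the set variables
  have hAG' : A * G = 1 := hAG hbasis x
  have hGA' : G * A = 1 := hGA hbasis x
  have hGsym' : G.transpose = G := hGsym x
  have hDG' : ∀ w, DGm V x w = -(G * DAm V x w * G) := fun w => hDG hV hbasis x w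
  have hDA' : ∀ w, DAm V x w = DSm V x w * S.transpose + S * (DSm V x w).transpose :=
    fun w => hDA hV x w
  have hAent' : ∀ l m, A l m = ∑ i, V i x l * V i x m := fun l m => hAent x l m
  have hSent : ∀ i j, S i j = V j x i := fun i j => rfl
  clear_value b v A G S
  -- piece 1
  have h1 : ∀ m, ∑ q, v q * DGm V x v q m = ((DGm V x v).mulVec v) m := by
    intro m
    simp only [Matrix.mulVec, dotProduct]
    exact Finset.sum_congr rfl fun q _ => by rw [hDGsym hbasis x v q m]; ring
  have piece1 : ∑ m, A l m * (∑ q, v q * DGm V x v q m)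
      = -(((DSm V x v).mulVec a) l + ((S * (DSm V x v).transpose).mulVec b) l) := by
    calc ∑ m, A l m * (∑ q, v q * DGm V x v q m)
        = ∑ m, A l m * ((DGm V x v).mulVec v) m := by
          exact Finset.sum_congr rfl fun m _ => by rw [h1 m]
      _ = (A.mulVec ((DGm V x v).mulVec v)) l := by
          simp only [Matrix.mulVec, dotProduct]
      _ = ((A * DGm V x v).mulVec v) l := by rw [Matrix.mulVec_mulVec]
      _ = ((-(DAm V x v * G)).mulVec v) l := by
          rw [hDG' v, Matrix.mul_neg, ← Matrix.mul_assoc, ← Matrix.mul_assoc, hAG',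
            Matrix.one_mul]
      _ = -(((DAm V x v * G).mulVec v) l) := by rw [Matrix.neg_mulVec]; rfl
      _ = -(((DAm V x v).mulVec b) l) := by rw [← Matrix.mulVec_mulVec, ← hbdef]
      _ = -(((DSm V x v * S.transpose + S * (DSm V x v).transpose).mulVec b) l) := by
          rw [← hDA' v]
      _ = -(((DSm V x v).mulVec a) l + ((S * (DSm V x v).transpose).mulVec b) l) := by
          rw [Matrix.add_mulVec, Pi.add_apply, ← Matrix.mulVec_mulVec, hstb]
  -- piece 2
  have hvG : v ᵥ* G = b := by
    have h := Matrix.mulVec_transpose G v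
    rw [hGsym'] at h
    rw [hbdef, ← h]
  have hbs : b ᵥ* S = a := by rw [← Matrix.mulVec_transpose, hstb]
  have piece2 : ∀ w, ∑ p, ∑ q, (v p * v q) * DGm V x w p q
      = -(2 * (b ⬝ᵥ (DSm V x w).mulVec a)) := by
    intro w
    have s1 : ∑ p, ∑ q, (v p * v q) * DGm V x w p q = v ⬝ᵥ (DGm V x w).mulVec v := by
      simp only [dotProduct, Matrix.mulVec, Finset.mul_sum]
      exact Finset.sum_congr rfl fun p _ => Finset.sum_congr rfl fun q _ => by ring
    rw [s1, hDG' w, Matrix.neg_mulVec, dotProduct_neg, neg_inj]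
    calc v ⬝ᵥ (G * DAm V x w * G).mulVec v
        = v ⬝ᵥ G.mulVec ((DAm V x w).mulVec (G.mulVec v)) := by
          rw [Matrix.mulVec_mulVec, Matrix.mulVec_mulVec, Matrix.mul_assoc]
      _ = (v ᵥ* G) ⬝ᵥ ((DAm V x w).mulVec b) := by
          rw [Matrix.dotProduct_mulVec, ← hbdef]
      _ = b ⬝ᵥ ((DAm V x w).mulVec b) := by rw [hvG]
      _ = b ⬝ᵥ ((DSm V x w * S.transpose).mulVec b)
          + b ⬝ᵥ ((S * (DSm V x w).transpose).mulVec b) := by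
          rw [hDA' w, Matrix.add_mulVec, dotProduct_add]
      _ = 2 * (b ⬝ᵥ (DSm V x w).mulVec a) := by
          have t1 : b ⬝ᵥ ((DSm V x w * S.transpose).mulVec b)
              = b ⬝ᵥ (DSm V x w).mulVec a := by
            rw [← Matrix.mulVec_mulVec, hstb]
          have t2 : b ⬝ᵥ ((S * (DSm V x w).transpose).mulVec b)
              = b ⬝ᵥ (DSm V x w).mulVec a := by
            rw [← Matrix.mulVec_mulVec, Matrix.dotProduct_mulVec, hbs,
              Matrix.dotProduct_mulVec, Matrix.vecMul_transpose, dotProduct_comm]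
          rw [t1, t2]; ring
  -- frame identity, converted
  have key : ∀ (i j : Fin d) (p : Fin d), (fderiv ℝ (V j) x (V i x)) p
      = ∑ m, V i x m * (fderiv ℝ (V j) x (Pi.single m 1)) p := by
    intro i j p
    have h := congrFun (clm_apply_eq_sum' (fderiv ℝ (V j) x) (V i x)) p
    simpa [Finset.sum_apply, Pi.smul_apply, smul_eq_mul] using h
  have hL : ((S * (DSm V x v).transpose).mulVec b) l
      = ∑ j, V j x l * (∑ i, a i * ∑ p, (fderiv ℝ (V j) x (V i x)) p * b p) := by
    calc ((S * (DSm V x v).transpose).mulVec b) l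
        = ∑ p, (∑ j, S l j * (DSm V x v) p j) * b p := by
          simp only [Matrix.mulVec, dotProduct, Matrix.mul_apply,
            Matrix.transpose_apply]
      _ = ∑ p, ∑ j, S l j * (DSm V x v) p j * b p := by
          exact Finset.sum_congr rfl fun p _ => by rw [Finset.sum_mul]
      _ = ∑ j, ∑ p, S l j * (DSm V x v) p j * b p := Finset.sum_comm
      _ = ∑ j, V j x l * ∑ p, (fderiv ℝ (V j) x v) p * b p := by
          refine Finset.sum_congr rfl fun j _ => ?_
          rw [Finset.mul_sum]
          refine Finset.sum_congr rfl fun p _ => ?_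
          rw [DSm_apply, hSent l j]
          ring
      _ = ∑ j, V j x l * (∑ i, a i * ∑ p, (fderiv ℝ (V j) x (V i x)) p * b p) := by
          refine Finset.sum_congr rfl fun j _ => ?_
          congr 1
          have hterm : ∀ p, (fderiv ℝ (V j) x v) p
              = ∑ i, a i * (fderiv ℝ (V j) x (V i x)) p := by
            intro p
            rw [hfdv j]
            simp [Finset.sum_apply, Pi.smul_apply, smul_eq_mul]
          calc ∑ p, (fderiv ℝ (V j) x v) p * b p
              = ∑ p, ∑ i, a i * (fderiv ℝ (V j) x (V i x)) p * b p := by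
                refine Finset.sum_congr rfl fun p _ => ?_
                rw [hterm p, Finset.sum_mul]
            _ = ∑ i, ∑ p, a i * (fderiv ℝ (V j) x (V i x)) p * b p := Finset.sum_comm
            _ = ∑ i, a i * ∑ p, (fderiv ℝ (V j) x (V i x)) p * b p := by
                refine Finset.sum_congr rfl fun i _ => ?_
                rw [Finset.mul_sum]
                exact Finset.sum_congr rfl fun p _ => by ring
  have hR : ∑ m, A l m * (b ⬝ᵥ (DSm V x (Pi.single m 1)).mulVec a)
      = ∑ i, V i x l * (∑ j, a j * ∑ p, (fderiv ℝ (V j) x (V i x)) p * b p) := by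
    have hdot : ∀ m, b ⬝ᵥ (DSm V x (Pi.single m 1)).mulVec a
        = ∑ j, a j * ∑ p, (fderiv ℝ (V j) x (Pi.single m 1)) p * b p := by
      intro m
      calc b ⬝ᵥ (DSm V x (Pi.single m 1)).mulVec a
          = ∑ p, ∑ j, b p * ((DSm V x (Pi.single m 1)) p j * a j) := by
            simp only [dotProduct, Matrix.mulVec, Finset.mul_sum]
        _ = ∑ j, ∑ p, b p * ((DSm V x (Pi.single m 1)) p j * a j) := Finset.sum_comm
        _ = ∑ j, a j * ∑ p, (fderiv ℝ (V j) x (Pi.single m 1)) p * b p := by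
            refine Finset.sum_congr rfl fun j _ => ?_
            rw [Finset.mul_sum]
            refine Finset.sum_congr rfl fun p _ => ?_
            rw [DSm_apply]
            show b p * (fderiv ℝ (V j) x (Pi.single m 1) p * a j)
              = a j * (fderiv ℝ (V j) x (Pi.single m 1) p * b p)
            ring
    calc ∑ m, A l m * (b ⬝ᵥ (DSm V x (Pi.single m 1)).mulVec a)
        = ∑ m, ∑ i, ∑ j, V i x l * V i x m
            * (a j * ∑ p, (fderiv ℝ (V j) x (Pi.single m 1)) p * b p) := by
          refine Finset.sum_congr rfl fun m _ => ?_
          rw [hdot m, hAent' l m, Finset.sum_mul]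
          refine Finset.sum_congr rfl fun i _ => ?_
          rw [Finset.mul_sum]
      _ = ∑ i, ∑ m, ∑ j, V i x l * V i x m
            * (a j * ∑ p, (fderiv ℝ (V j) x (Pi.single m 1)) p * b p) := Finset.sum_comm
      _ = ∑ i, ∑ j, ∑ m, V i x l * V i x m
            * (a j * ∑ p, (fderiv ℝ (V j) x (Pi.single m 1)) p * b p) := by
          exact Finset.sum_congr rfl fun i _ => Finset.sum_comm
      _ = ∑ i, V i x l * (∑ j, a j * ∑ p, (fderiv ℝ (V j) x (V i x)) p * b p) := by
          refine Finset.sum_congr rfl fun i _ => ?_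
          rw [Finset.mul_sum]
          refine Finset.sum_congr rfl fun j _ => ?_
          calc ∑ m, V i x l * V i x m
                * (a j * ∑ p, (fderiv ℝ (V j) x (Pi.single m 1)) p * b p)
              = ∑ m, ∑ p, V i x l * a j
                  * (V i x m * ((fderiv ℝ (V j) x (Pi.single m 1)) p * b p)) := by
                refine Finset.sum_congr rfl fun m _ => ?_
                rw [Finset.mul_sum, Finset.mul_sum]
                refine Finset.sum_congr rfl fun p _ => by ring
            _ = ∑ p, ∑ m, V i x l * a j
                  * (V i x m * ((fderiv ℝ (V j) x (Pi.single m 1)) p * b p)) :=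
                Finset.sum_comm
            _ = ∑ p, V i x l * a j * ((fderiv ℝ (V j) x (V i x)) p * b p) := by
                refine Finset.sum_congr rfl fun p _ => ?_
                rw [key i j p, Finset.sum_mul, Finset.mul_sum]
                refine Finset.sum_congr rfl fun m _ => by ring
            _ = V i x l * (a j * ∑ p, (fderiv ℝ (V j) x (V i x)) p * b p) := by
                rw [Finset.mul_sum, Finset.mul_sum]
                exact Finset.sum_congr rfl fun p _ => by ring
  have hframe : ∑ m, A l m * (b ⬝ᵥ (DSm V x (Pi.single m 1)).mulVec a)
      = ((S * (DSm V x v).transpose).mulVec b) l := by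
    rw [hR, hL]
    exact (frame_identity hbasis hbracket hskew x a b l hbr).symm
  -- assemble
  rw [hT]
  have hfinal : ∑ m, A l m * ((∑ q, v q * DGm V x v q m) + (∑ q, v q * DGm V x v q m)
        - ∑ p, ∑ q, (v p * v q) * DGm V x (Pi.single m 1) p q)
      = 2 * (∑ m, A l m * (∑ q, v q * DGm V x v q m))
        + 2 * (∑ m, A l m * (b ⬝ᵥ (DSm V x (Pi.single m 1)).mulVec a)) := by
    rw [Finset.mul_sum, Finset.mul_sum, ← Finset.sum_add_distrib]
    refine Finset.sum_congr rfl fun m _ => ?_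
    rw [piece2 (Pi.single m 1)]
    ring
  rw [hfinal, piece1, hframe]
  have hX : ((DSm V x v).mulVec a) l = ∑ i, a i * (fderiv ℝ (V i) x v) l := by
    simp only [Matrix.mulVec, dotProduct, DSm_apply]
    exact Finset.sum_congr rfl fun i _ => by ring
  rw [← hX]
  ring

end GeoAux

/-- under the structure equations `[Vᵢ,Vⱼ] = Σ_l ω_{ij}^l V_l` with
`ω_{ij}^l = -ω_{il}^j`, a solution of the controlled ODE `x' = Σ Vᵢ(x) kᵢ'` with smooth
`k`, `k(0) = 0`, satisfies the geodesic equation of the metric `g = (σσᵀ)⁻¹` if and only if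
`k(t) = t·u` for some `u ∈ ℝ^d`. -/
theorem geodesic_iff_linear_control (d : ℕ)
    (V : Fin d → (Fin d → ℝ) → (Fin d → ℝ))
    (hV : ∀ i, ContDiff ℝ (⊤ : ℕ∞) (V i))
    (hVbd : ∀ i (n : ℕ), ∃ C : ℝ, ∀ x, ‖iteratedFDeriv ℝ n (V i) x‖ ≤ C)
    (hbasis : ∀ x, LinearIndependent ℝ fun i => V i x)
    (ω : Fin d → Fin d → Fin d → (Fin d → ℝ) → ℝ)
    (hωsmooth : ∀ i j l, ContDiff ℝ (⊤ : ℕ∞) (ω i j l))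
    (hωbd : ∀ i j l, ∃ C : ℝ, ∀ x, |ω i j l x| ≤ C)
    (hbracket : ∀ i j (x : Fin d → ℝ),
      fderiv ℝ (V j) x (V i x) - fderiv ℝ (V i) x (V j x) = ∑ l, ω i j l x • V l x)
    (hskew : ∀ i j l x, ω i j l x = - ω i l j x)
    (x₀ : Fin d → ℝ) (k : ℝ → Fin d → ℝ) (hk : ContDiff ℝ (⊤ : ℕ∞) k) (hk0 : k 0 = 0)
    (xp : ℝ → Fin d → ℝ) (hxp0 : xp 0 = x₀)
    (hxp : ∀ t, HasDerivAt xp (∑ i, deriv (fun s => k s i) t • V i (xp t)) t) :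
    (∀ (t : ℝ) (l : Fin d),
        deriv (fun s => deriv (fun τ => xp τ l) s) t
          + ∑ i, ∑ j, christoffel V l i j (xp t)
              * deriv (fun τ => xp τ i) t * deriv (fun τ => xp τ j) t = 0)
      ↔ ∃ u : Fin d → ℝ, ∀ t, k t = t • u := by
  classical
  set F : ℝ → Fin d → ℝ := fun t => ∑ i, deriv (fun s => k s i) t • V i (xp t) with hFdef
  have hkc : ∀ i, ContDiff ℝ (⊤ : ℕ∞) (fun s => k s i) := fun i => (contDiff_pi.mp hk) i
  have hk' : ∀ i, Differentiable ℝ (deriv (fun s => k s i)) := fun i =>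
    ((contDiff_infty_iff_deriv.mp ((hkc i).of_le (le_refl ((⊤:ℕ∞) : WithTop ℕ∞)))).2).differentiable (by simp)
  have hxpl : ∀ (t : ℝ) (l : Fin d), HasDerivAt (fun τ => xp τ l) (F t l) t :=
    fun t l => (hasDerivAt_pi.mp (hxp t)) l
  have hderiv_xp : ∀ l : Fin d, deriv (fun τ => xp τ l) = fun t => F t l :=
    fun l => funext fun t => (hxpl t l).deriv
  have hFl : ∀ (t : ℝ) (l : Fin d),
      F t l = ∑ i, deriv (fun s => k s i) t * V i (xp t) l := by
    intro t l
    rw [hFdef]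
    simp [Finset.sum_apply, Pi.smul_apply, smul_eq_mul]
  -- second-derivative computation
  have hF' : ∀ (t : ℝ) (l : Fin d), HasDerivAt (fun s => F s l)
      (∑ i, (deriv (deriv (fun s => k s i)) t * V i (xp t) l
        + deriv (fun s => k s i) t * (fderiv ℝ (V i) (xp t) (F t)) l)) t := by
    intro t l
    have heq : (fun s => F s l) = fun s => ∑ i, deriv (fun τ => k τ i) s * V i (xp s) l :=
      funext fun s => hFl s l
    rw [heq]
    apply HasDerivAt.fun_sum
    intro i _
    have h1 : HasDerivAt (fun s => deriv (fun τ => k τ i) s)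
        (deriv (deriv (fun s => k s i)) t) t :=
      ((hk' i) t).hasDerivAt
    have h2 : HasDerivAt (fun s => V i (xp s) l) ((fderiv ℝ (V i) (xp t) (F t)) l) t := by
      have hVi : HasFDerivAt (V i) (fderiv ℝ (V i) (xp t)) (xp t) :=
        (((hV i).differentiable (by simp)) (xp t)).hasFDerivAt
      have hcomp : HasDerivAt (fun s => V i (xp s)) (fderiv ℝ (V i) (xp t) (F t)) t :=
        hVi.comp_hasDerivAt t (hxp t)
      exact (hasDerivAt_pi.mp hcomp) l
    exact h1.mul h2
  have hsecond : ∀ (t : ℝ) (l : Fin d),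
      deriv (fun s => deriv (fun τ => xp τ l) s) t
        = ∑ i, (deriv (deriv (fun s => k s i)) t * V i (xp t) l
            + deriv (fun s => k s i) t * (fderiv ℝ (V i) (xp t) (F t)) l) := by
    intro t l
    have : (fun s => deriv (fun τ => xp τ l) s) = fun s => F s l := by
      funext s
      rw [hderiv_xp l]
    rw [this]
    exact (hF' t l).deriv
  -- Christoffel contraction at x = xp t
  have hγ : ∀ (t : ℝ) (l : Fin d),
      ∑ i, ∑ j, christoffel V l i j (xp t)
          * deriv (fun τ => xp τ i) t * deriv (fun τ => xp τ j) t
        = - ∑ i, deriv (fun s => k s i) t * (fderiv ℝ (V i) (xp t) (F t)) l := by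
    intro t l
    have hveq : (sigmaMat V (xp t)).mulVec (fun i => deriv (fun s => k s i) t) = F t := by
      rw [GeoAux.mulVec_eq, hFdef]
    have h := GeoAux.christoffel_contract hV hbasis hbracket hskew (xp t)
      (fun i => deriv (fun s => k s i) t) l
    rw [hveq] at h
    calc ∑ i, ∑ j, christoffel V l i j (xp t)
          * deriv (fun τ => xp τ i) t * deriv (fun τ => xp τ j) t
        = ∑ i, ∑ j, christoffel V l i j (xp t) * F t i * F t j := by
          refine Finset.sum_congr rfl fun i _ => Finset.sum_congr rfl fun j _ => ?_
          rw [hderiv_xp i, hderiv_xp j]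
      _ = - ∑ i, deriv (fun s => k s i) t * (fderiv ℝ (V i) (xp t) (F t)) l := h
  -- the main identity
  have hmain : ∀ (t : ℝ) (l : Fin d),
      deriv (fun s => deriv (fun τ => xp τ l) s) t
          + ∑ i, ∑ j, christoffel V l i j (xp t)
              * deriv (fun τ => xp τ i) t * deriv (fun τ => xp τ j) t
        = ∑ i, deriv (deriv (fun s => k s i)) t * V i (xp t) l := by
    intro t l
    rw [hsecond t l, hγ t l, Finset.sum_add_distrib]
    ring
  -- geodesic equation iff k'' = 0
  have hiff : (∀ (t : ℝ) (l : Fin d),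
      deriv (fun s => deriv (fun τ => xp τ l) s) t
        + ∑ i, ∑ j, christoffel V l i j (xp t)
            * deriv (fun τ => xp τ i) t * deriv (fun τ => xp τ j) t = 0)
      ↔ ∀ (t : ℝ) (i : Fin d), deriv (deriv (fun s => k s i)) t = 0 := by
    constructor
    · intro h t i
      have hz : ∑ j, deriv (deriv (fun s => k s j)) t • V j (xp t) = 0 := by
        funext l
        have h0 := h t l
        rw [hmain t l] at h0
        simpa [Finset.sum_apply, Pi.smul_apply, smul_eq_mul] using h0
      exact (Fintype.linearIndependent_iff.mp (hbasis (xp t))) _ hz i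
    · intro h t l
      rw [hmain t l]
      simp [h t]
  rw [hiff]
  constructor
  · intro h
    refine ⟨fun i => deriv (fun s => k s i) 0, ?_⟩
    intro t
    funext i
    have hconst : deriv (fun s => k s i) t = deriv (fun s => k s i) 0 :=
      is_const_of_deriv_eq_zero (hk' i) (fun s => h s i) t 0
    -- the function k_i(t) - t * u_i is constant
    set u : ℝ := deriv (fun s => k s i) 0 with hudef
    have hg : ∀ s : ℝ, HasDerivAt (fun τ => k τ i - τ * u) (deriv (fun s => k s i) s - u) s := by
      intro s
      have h1 : HasDerivAt (fun τ => k τ i) (deriv (fun s => k s i) s) s :=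
        (((hkc i).differentiable (by simp)) s).hasDerivAt
      have h2 : HasDerivAt (fun τ : ℝ => τ * u) (1 * u) s := (hasDerivAt_id s).mul_const u
      simpa using h1.fun_sub h2
    have hgc : (fun τ => k τ i - τ * u) t = (fun τ => k τ i - τ * u) 0 := by
      apply is_const_of_deriv_eq_zero (fun s => (hg s).differentiableAt)
      intro s
      rw [(hg s).deriv]
      have : deriv (fun s => k s i) s = deriv (fun s => k s i) 0 :=
        is_const_of_deriv_eq_zero (hk' i) (fun r => h r i) s 0
      rw [this, ← hudef]
      ring
    have hk0i : k 0 i = 0 := by rw [hk0]; rfl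
    simp only [hk0i, zero_mul, sub_zero] at hgc
    have : k t i = t * u := by linarith [hgc]
    rw [this]
    simp [Pi.smul_apply, smul_eq_mul, hudef]
  · rintro ⟨u, hu⟩ t i
    have hki : (fun s => k s i) = fun s => s * u i := by
      funext s
      rw [hu s]
      simp [Pi.smul_apply, smul_eq_mul]
    have hd1 : deriv (fun s => k s i) = fun _ => u i := by
      funext s
      rw [hki]
      simpa using ((hasDerivAt_id s).mul_const (u i)).deriv
    rw [hd1]
    simp
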